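/- The vector p_V = (4, √2 - i√6, -2 - 2i√3)ᵀ is an eigenvector of V = TS⁻¹ with eigenvalue 1, and ⟨p_V, p_V⟩ = -8 < 0 for the Hermitian form ⟨z,w⟩ = z̄₁w₃ + z̄₂w₂ + z̄₃w₁ (so [p_V] lies in the complex hyperbolic plane). -/

import Mathlib

open Matrix Complex

noncomputable def ζ : ℂ := Complex.exp (Complex.I * Real.pi / 3)

noncomputable def S : Matrix (Fin 3) (Fin 3) ℂ :=
  !![1, (Real.sqrt 2 : ℂ) * (starRingEnd ℂ) ζ, -1;
     -(Real.sqrt 2 : ℂ) * ζ, -1, 0;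
     -1, 0, 0]

noncomputable def T : Matrix (Fin 3) (Fin 3) ℂ :=
  !![0, 0, -1;
     0, -1, -(Real.sqrt 2 : ℂ) * (starRingEnd ℂ) ζ;
     -1, (Real.sqrt 2 : ℂ) * ζ, 1]

noncomputable def V : Matrix (Fin 3) (Fin 3) ℂ := T * S ^ 2

noncomputable def pV : Fin 3 → ℂ :=
  ![4, (Real.sqrt 2 : ℂ) - (Real.sqrt 6 : ℂ) * Complex.I,
    -2 - 2 * (Real.sqrt 3 : ℂ) * Complex.I]

noncomputable def herm (z w : Fin 3 → ℂ) : ℂ :=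
  (starRingEnd ℂ) (z 0) * w 2 + (starRingEnd ℂ) (z 1) * w 1 + (starRingEnd ℂ) (z 2) * w 0

/-!
`ζ = e^{iπ/3}` satisfies `conj ζ = 1 - ζ` and `ζ² = ζ - 1`, and `p_V = (4, 2√2 conj ζ, -4ζ)`.
In these coordinates every entry of `S p_V`, `S² p_V`, `T S² p_V` and `⟨p_V, p_V⟩` is a polynomial
in `ζ` and `√2` that reduces to the claimed value using only `ζ² = ζ - 1` and `√2² = 2`.
-/

lemma ζ_eq : ζ = (1 + Real.sqrt 3 * I) / 2 := by
  have h : I * Real.pi / 3 = (Real.pi / 3 : ℝ) * I := by push_cast; ring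
  rw [ζ, h, exp_mul_I, ← ofReal_cos, ← ofReal_sin, Real.cos_pi_div_three,
    Real.sin_pi_div_three]
  push_cast; ring

lemma conj_ζ : starRingEnd ℂ ζ = 1 - ζ := by
  rw [ζ_eq, map_div₀, map_add, map_mul, conj_ofReal, conj_I]
  simp only [map_one, map_ofNat]
  ring

lemma ζ_sq : ζ ^ 2 = ζ - 1 := by
  have h3 : (Real.sqrt 3 : ℂ) ^ 2 = 3 := by
    rw [← ofReal_pow, Real.sq_sqrt (by norm_num)]; norm_num
  rw [ζ_eq]
  linear_combination I ^ 2 / 4 * h3 + 3 / 4 * I_sq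

lemma ofReal_sqrt_two_sq : (Real.sqrt 2 : ℂ) ^ 2 = 2 := by
  rw [← ofReal_pow, Real.sq_sqrt (by norm_num)]; norm_num

lemma pV_eq : pV = ![4, 2 * Real.sqrt 2 * starRingEnd ℂ ζ, -4 * ζ] := by
  have h6 : Real.sqrt 6 = Real.sqrt 2 * Real.sqrt 3 := by
    rw [← Real.sqrt_mul (by norm_num)]; norm_num
  rw [pV, conj_ζ, ζ_eq, h6]
  push_cast
  refine vec3_eq ?_ ?_ ?_ <;> ring

lemma mulVec_fin_three {α : Type*} [NonUnitalNonAssocSemiring α] (a b c d e f g h i x y z : α) :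
    !![a, b, c; d, e, f; g, h, i] *ᵥ ![x, y, z] =
      ![a * x + b * y + c * z, d * x + e * y + f * z, g * x + h * y + i * z] := by
  ext j; fin_cases j <;> simp [mulVec, add_assoc]

lemma herm_fin_three (a b c x y z : ℂ) :
    herm ![a, b, c] ![x, y, z] = starRingEnd ℂ a * z + starRingEnd ℂ b * y + starRingEnd ℂ c * x :=
  rfl

lemma S_mulVec_pV : S *ᵥ pV = ![4, -2 * Real.sqrt 2 * (1 + ζ), -4] := by
  rw [S, pV_eq, mulVec_fin_three, conj_ζ]
  refine vec3_eq ?_ ?_ ?_ <;> grind [ζ_sq, ofReal_sqrt_two_sq]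

lemma S_sq_mulVec_pV : (S ^ 2) *ᵥ pV = ![4 * ζ, 2 * Real.sqrt 2 * starRingEnd ℂ ζ, -4] := by
  rw [pow_two, ← mulVec_mulVec, S_mulVec_pV, S, mulVec_fin_three, conj_ζ]
  refine vec3_eq ?_ ?_ ?_ <;> grind [ζ_sq, ofReal_sqrt_two_sq]

lemma V_mulVec_pV : V *ᵥ pV = pV := by
  rw [V, ← mulVec_mulVec, S_sq_mulVec_pV, T, mulVec_fin_three, pV_eq, conj_ζ]
  refine vec3_eq ?_ ?_ ?_ <;> grind [ζ_sq, ofReal_sqrt_two_sq]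

lemma herm_pV : herm pV pV = -8 := by
  rw [pV_eq, herm_fin_three]
  simp only [map_mul, map_neg, map_ofNat, conj_ofReal, map_sub, map_one, conj_ζ]
  grind [ζ_sq, ofReal_sqrt_two_sq]

theorem stmt_16 : V.mulVec pV = pV ∧ herm pV pV = -8 :=
  ⟨V_mulVec_pV, herm_pV⟩
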